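/- arXiv:2409.12068 — 2 statements merged into one kernel-verified Lean document; each statement's English description precedes it below -/
import Mathlib

section
/- Let x be an infinite word over Σ₃, and suppose that for some n ≥ 0 the infinite word τ(g(fⁿ(x))) is 16/7-power-free. Then x is 5-power-free and even-3-power-free (x contains no factor of exponent ≥ 5, and no factor that is a cube p³ where p contains an even number of 2's). -/
abbrev Word := List (Fin 3)
abbrev InfWord := ℕ → Fin 3

/-- `u` is a (finite, contiguous) factor of the infinite word `w`. -/
def IsFactor (w : InfWord) (u : Word) : Prop :=
  ∃ i : ℕ, u = (List.range u.length).map fun k => w (i + k)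

/-- `u` is a prefix of the infinite word `z`. -/
def IsPrefixInf (u : Word) (z : InfWord) : Prop :=
  u = (List.range u.length).map z

/-- `p` is a period of the finite word `w`. -/
def HasPeriod (w : Word) (p : ℕ) : Prop :=
  0 < p ∧ p ≤ w.length ∧ ∀ i : ℕ, i + p < w.length → w.getD (i + p) 0 = w.getD i 0

/-- The infinite word `w` is `α`-power-free: it has no nonempty factor `u`
with a period `p` satisfying `|u|/p ≥ α`. -/
def PowerFree (α : ℚ) (w : InfWord) : Prop :=
  ∀ (u : Word) (p : ℕ), IsFactor w u → u ≠ [] → HasPeriod u p →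
    (u.length : ℚ) / (p : ℚ) < α

/-- The set of palindromic factors of a finite word. -/
def palSet (w : Word) : Set Word := {u | u <:+: w ∧ u.reverse = u}

/-- A finite word of length `n` is rich if it has exactly `n + 1`
distinct palindromic factors (including the empty word). -/
def RichWord (w : Word) : Prop := (palSet w).ncard = w.length + 1

/-- An infinite word is rich if all of its finite factors are rich. -/
def RichSeq (z : InfWord) : Prop := ∀ u : Word, IsFactor z u → RichWord u

def fm : Fin 3 → Word := ![[0, 1], [0, 2, 2], [0, 2]]
def gm : Fin 3 → Word := ![[2, 0], [2, 1], [2]]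
def t1 : Fin 3 → Word :=
  ![[0, 0, 1], [0, 0, 1, 0, 1, 1, 0, 1],
    [0, 0, 1, 0, 1, 1, 0, 1, 0, 0, 1, 0, 1, 1, 0, 1]]
def t2 : Fin 3 → Word :=
  ![[0, 0, 2], [0, 0, 2, 0, 2, 2, 0, 2],
    [0, 0, 2, 0, 2, 2, 0, 2, 0, 0, 2, 0, 2, 2, 0, 2]]

/-- The morphism `f` on finite words. -/
def fList (w : Word) : Word := w.flatMap fm
/-- The morphism `g` on finite words. -/
def gList (w : Word) : Word := w.flatMap gm

def tauAux : Bool → Word → Word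
  | _, [] => []
  | b, a :: w => (if b then t1 a else t2 a) ++ tauAux (!b) w

/-- The transducer `τ` on finite words: `t1` is applied to even-indexed letters
and `t2` to odd-indexed letters. -/
def tauList (w : Word) : Word := tauAux true w

/-- The morphism `f` on infinite words. -/
def fInf (x : InfWord) : InfWord :=
  fun i => (fList ((List.range (i + 1)).map x)).getD i 0
/-- The morphism `g` on infinite words. -/
def gInf (x : InfWord) : InfWord :=
  fun i => (gList ((List.range (i + 1)).map x)).getD i 0
/-- The transducer `τ` on infinite words. -/
def tauInf (x : InfWord) : InfWord :=
  fun i => (tauList ((List.range (i + 1)).map x)).getD i 0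

/-- The critical exponent of an infinite word. -/
noncomputable def criticalExponent (z : InfWord) : ℝ :=
  sSup {r : ℝ | ∃ (u : Word) (p : ℕ), IsFactor z u ∧ u ≠ [] ∧ HasPeriod u p ∧
    r = (u.length : ℝ) / (p : ℝ)}

/-! Since `f` and `g` are morphisms, `g ∘ fⁿ` maps a fifth power `q⁵` in `x` to a fifth power
`v⁵` in `g(fⁿ(x))`, and a cube `p³` to a cube `v³`. As `f` preserves the parity of the number
of `2`s and `|g(w)| + |w|₂ = 2|w|` (`|w|₂` counting the `2`s of `w`), `v` has even length when
`p` has an even number of `2`s. The transducer `τ` is back in its initial state after an even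
number of letters, so it sends `v³` with `|v|` even to the cube `τ(v)³`, and `v⁵ = V V v` with
`V = v v` to `τ(V) τ(V) τ(v)`, where `τ(v)` is a prefix of `τ(V)` and `|τ(V)| = 2|τ(v)|`: a word
of exponent `5/2`. Both `3` and `5/2` exceed `16/7`. -/

section Prefix

variable {w : InfWord} {a b u : Word}

lemma IsPrefixInf.prefix_map_range (h : IsPrefixInf a w) {m : ℕ} (hm : a.length ≤ m) :
    a <+: (List.range m).map w := by
  obtain ⟨k, rfl⟩ := Nat.exists_eq_add_of_le hm
  rw [List.range_add, List.map_append]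
  exact ⟨_, by rw [← h]⟩

lemma IsPrefixInf.prefix_or_prefix (ha : IsPrefixInf a w) (hb : IsPrefixInf b w) :
    a <+: b ∨ b <+: a :=
  List.prefix_or_prefix_of_prefix (ha.prefix_map_range (Nat.le_add_right _ b.length))
    (hb.prefix_map_range (Nat.le_add_left _ a.length))

lemma isFactor_of_isPrefixInf_append (h : IsPrefixInf (a ++ u) w) : IsFactor w u := by
  rw [IsPrefixInf, List.length_append, List.range_add, List.map_append, List.map_map] at h
  exact ⟨a.length, List.append_inj_right h (by simp)⟩

lemma IsFactor.exists_isPrefixInf_append (h : IsFactor w u) : ∃ a, IsPrefixInf (a ++ u) w := by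
  obtain ⟨i, hu⟩ := h
  refine ⟨(List.range i).map w, ?_⟩
  rw [IsPrefixInf, List.length_append, List.length_map, List.length_range, List.range_add,
    List.map_append, List.map_map]
  conv_lhs => rw [hu]
  rfl

lemma IsFactor.take (h : IsFactor w u) (m : ℕ) : IsFactor w (u.take m) := by
  obtain ⟨i, hu⟩ := h
  refine ⟨i, ?_⟩
  conv_lhs => rw [hu]
  rw [← List.map_take, List.take_range, List.length_take]

end Prefix

/-- `fInf`, `gInf` and `tauInf` are definitionally `extendInf fList`, `extendInf gList` and
`extendInf tauList`. -/
def extendInf (F : Word → Word) (w : InfWord) : InfWord :=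
  fun i => (F ((List.range (i + 1)).map w)).getD i 0

section Extend

variable {F : Word → Word} {w : InfWord} {a u : Word}

lemma IsPrefixInf.extendInf (h : IsPrefixInf a w) (hmono : ∀ a b, F a <+: F (a ++ b))
    (hlen : ∀ a, a.length ≤ (F a).length) : IsPrefixInf (F a) (extendInf F w) := by
  have hprefix : ∀ {a b}, a <+: b → F a <+: F b := by
    rintro a _ ⟨c, rfl⟩
    exact hmono a c
  refine List.ext_getElem (by simp) fun j hj _ => ?_
  set b := (List.range (j + 1)).map w
  have hb : IsPrefixInf b w := by simp [b, IsPrefixInf]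
  have hjb : j < (F b).length := (hlen b).trans_lt' (by simp [b])
  rw [List.getElem_map, List.getElem_range]
  change (F a)[j] = (F b).getD j 0
  rw [List.getD_eq_getElem _ _ hjb]
  rcases h.prefix_or_prefix hb with hab | hba
  · exact (hprefix hab).getElem hj
  · exact ((hprefix hba).getElem hjb).symm

lemma IsFactor.exists_extendInf (h : IsFactor w u) (hmono : ∀ a b, F a <+: F (a ++ b))
    (hlen : ∀ a, a.length ≤ (F a).length) :
    ∃ a, ∀ v, F (a ++ u) = F a ++ v → IsFactor (extendInf F w) v := by
  obtain ⟨a, ha⟩ := h.exists_isPrefixInf_append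
  refine ⟨a, fun v hv => isFactor_of_isPrefixInf_append (a := F a) ?_⟩
  rw [← hv]
  exact ha.extendInf hmono hlen

end Extend

section Period

variable {u s r : Word} {p : ℕ}

lemma hasPeriod_append_of_prefix (hs : s ≠ []) (h : r <+: s ++ r) :
    HasPeriod (s ++ r) s.length := by
  refine ⟨List.length_pos_iff.mpr hs, by simp, fun i hi => ?_⟩
  rw [List.length_append] at hi
  obtain ⟨c, hc⟩ := h
  rw [List.getD_append_right _ _ _ _ (by omega), Nat.add_sub_cancel, ← hc,
    List.getD_append _ _ _ _ (by omega)]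

lemma PowerFree.length_lt {α : ℚ} {w : InfWord} (hpf : PowerFree α w) (h : IsFactor w (s ++ r))
    (hs : s ≠ []) (hr : r <+: s ++ r) : ((s ++ r).length : ℚ) < α * s.length := by
  have hpos : (0 : ℚ) < s.length := by exact_mod_cast List.length_pos_iff.mpr hs
  exact (div_lt_iff₀ hpos).mp <|
    hpf _ _ h (by simp [hs]) (hasPeriod_append_of_prefix hs hr)

lemma HasPeriod.drop_prefix (hper : HasPeriod u p) : u.drop p <+: u := by
  obtain ⟨-, -, hper⟩ := hper
  rw [List.prefix_iff_eq_take]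
  refine List.ext_getElem (by simp) fun i h1 _ => ?_
  rw [List.length_drop] at h1
  rw [List.getElem_drop, List.getElem_take, ← List.getD_eq_getElem _ 0,
    ← List.getD_eq_getElem _ 0, Nat.add_comm]
  exact hper i (by omega)

lemma HasPeriod.take_add (hper : HasPeriod u p) {m : ℕ} (hm : p + m ≤ u.length) :
    u.take (p + m) = u.take p ++ u.take m := by
  obtain ⟨c, hc⟩ := hper.drop_prefix
  rw [List.take_add]
  congr 1
  conv_rhs => rw [← hc]
  rw [List.take_append_of_le_length (by simp; omega)]

lemma HasPeriod.take_five_mul (hper : HasPeriod u p) (h : 5 * p ≤ u.length) :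
    u.take (5 * p) = u.take p ++ u.take p ++ u.take p ++ u.take p ++ u.take p := by
  rw [show 5 * p = p + (p + (p + (p + p))) by ring, hper.take_add (by omega),
    hper.take_add (m := p + (p + p)) (by omega), hper.take_add (m := p + p) (by omega),
    hper.take_add (m := p) (by omega)]
  simp only [List.append_assoc]

end Period

lemma List.length_le_sum_map {α : Type*} {l : List α} {f : α → ℕ} (hf : ∀ a, 1 ≤ f a) :
    l.length ≤ (l.map f).sum := by
  simpa using List.length_le_sum_of_one_le (l.map f) (by simpa using fun a _ => hf a)

lemma List.length_le_length_flatMap {α β : Type*} {l : List α} {f : α → List β}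
    (hf : ∀ a, f a ≠ []) : l.length ≤ (l.flatMap f).length := by
  rw [List.length_flatMap]
  exact List.length_le_sum_map fun a => List.length_pos_iff.mpr (hf a)

lemma Function.iterate_append {α : Type*} {F : List α → List α}
    (hF : ∀ a b, F (a ++ b) = F a ++ F b) (n : ℕ) (a b : List α) :
    F^[n] (a ++ b) = F^[n] a ++ F^[n] b := by
  induction n generalizing a b with
  | zero => rfl
  | succ n ih => rw [iterate_succ_apply, iterate_succ_apply, iterate_succ_apply, hF, ih]

section Morphisms

variable {w : InfWord} {u : Word}

lemma fList_append (a b : Word) : fList (a ++ b) = fList a ++ fList b :=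
  List.flatMap_append

lemma gList_append (a b : Word) : gList (a ++ b) = gList a ++ gList b :=
  List.flatMap_append

lemma length_le_length_fList (l : Word) : l.length ≤ (fList l).length :=
  List.length_le_length_flatMap fun a => by fin_cases a <;> simp [fm]

lemma length_le_length_gList (l : Word) : l.length ≤ (gList l).length :=
  List.length_le_length_flatMap fun a => by fin_cases a <;> simp [gm]

lemma count_two_fList (l : Word) : (fList l).count 2 = 2 * l.count 1 + l.count 2 := by
  induction l with
  | nil => rfl
  | cons a l ih =>
    rw [fList, List.flatMap_cons, ← fList, List.count_append, ih]
    fin_cases a <;> simp [fm] <;> omega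

lemma length_gList_add_count_two (l : Word) : (gList l).length + l.count 2 = 2 * l.length := by
  induction l with
  | nil => rfl
  | cons a l ih =>
    rw [gList, List.flatMap_cons, ← gList, List.length_append]
    fin_cases a <;> simp [gm] <;> omega

lemma IsFactor.fInf (h : IsFactor w u) : IsFactor (fInf w) (fList u) := by
  obtain ⟨a, ha⟩ := h.exists_extendInf (fun a b => ⟨_, (fList_append a b).symm⟩)
    length_le_length_fList
  exact ha _ (fList_append a u)

lemma IsFactor.gInf (h : IsFactor w u) : IsFactor (gInf w) (gList u) := by
  obtain ⟨a, ha⟩ := h.exists_extendInf (fun a b => ⟨_, (gList_append a b).symm⟩)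
    length_le_length_gList
  exact ha _ (gList_append a u)

lemma IsFactor.iterate_fInf (h : IsFactor w u) (n : ℕ) :
    IsFactor (_root_.fInf^[n] w) (fList^[n] u) := by
  induction n with
  | zero => exact h
  | succ n ih =>
    rw [Function.iterate_succ_apply', Function.iterate_succ_apply']
    exact ih.fInf

lemma gList_iterate_fList_ne_nil (n : ℕ) (h : u ≠ []) : gList (fList^[n] u) ≠ [] := by
  have := (length_le_length_gList _).trans' <|
    Function.Iterate.rec (fun l : Word => u.length ≤ l.length) (f := fList) le_rfl
      (fun l hl => hl.trans (length_le_length_fList l)) n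
  exact List.ne_nil_of_length_pos ((List.length_pos_iff.mpr h).trans_le this)

lemma even_length_gList_iterate_fList (n : ℕ) (h : Even (u.count 2)) :
    Even (gList (fList^[n] u)).length := by
  have hf : Even ((fList^[n] u).count 2) :=
    Function.Iterate.rec (fun l : Word => Even (l.count 2)) (f := fList) h
      (fun l hl => by rw [count_two_fList]; exact (even_two_mul _).add hl) n
  have := length_gList_add_count_two (fList^[n] u)
  exact (Nat.even_add.mp (this ▸ even_two_mul _)).mpr hf

end Morphisms

section Tau

variable {y : InfWord} {v : Word}

lemma tauAux_append (b : Bool) (u v : Word) :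
    tauAux b (u ++ v) = tauAux b u ++ tauAux (if Even u.length then b else !b) v := by
  induction u generalizing b with
  | nil => simp [tauAux]
  | cons a u ih =>
    rw [List.cons_append, tauAux, tauAux, ih, List.append_assoc, List.length_cons]
    by_cases h : Even u.length <;> simp [h, Nat.even_add_one]

lemma tauAux_append_of_even {u : Word} (b : Bool) (hu : Even u.length) (v : Word) :
    tauAux b (u ++ v) = tauAux b u ++ tauAux b v := by
  rw [tauAux_append, if_pos hu]

lemma length_tauAux (b : Bool) (l : Word) :
    (tauAux b l).length = (l.map fun a => (t1 a).length).sum := by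
  have ht : ∀ a, (t2 a).length = (t1 a).length := by decide
  induction l generalizing b with
  | nil => rfl
  | cons a l ih => cases b <;> simp [tauAux, ht, ih]

lemma length_le_length_tauAux (b : Bool) (l : Word) : l.length ≤ (tauAux b l).length := by
  rw [length_tauAux]
  exact List.length_le_sum_map fun a => by fin_cases a <;> simp [t1]

lemma IsFactor.tauInf (h : IsFactor y v) : ∃ b, IsFactor (tauInf y) (tauAux b v) := by
  obtain ⟨a, ha⟩ := h.exists_extendInf (F := tauList)
    (fun a b => ⟨_, (tauAux_append true a b).symm⟩) (length_le_length_tauAux true)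
  exact ⟨_, ha _ (tauAux_append true a v)⟩

lemma tauAux_ne_nil (b : Bool) (hv : v ≠ []) : tauAux b v ≠ [] :=
  List.ne_nil_of_length_pos <|
    (List.length_pos_iff.mpr hv).trans_le (length_le_length_tauAux b v)

lemma not_isFactor_cube_of_even_length (hpf : PowerFree (16 / 7) (tauInf y)) (hv : v ≠ [])
    (heven : Even v.length) : ¬ IsFactor y (v ++ v ++ v) := by
  intro h
  obtain ⟨b, hb⟩ := h.tauInf
  set s := tauAux b v
  have hcube : tauAux b (v ++ v ++ v) = s ++ (s ++ s) := by
    rw [tauAux_append_of_even b ⟨_, List.length_append⟩,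
      tauAux_append_of_even b heven, List.append_assoc]
  rw [hcube] at hb
  have hs := tauAux_ne_nil b hv
  have := hpf.length_lt hb hs ⟨s, by simp⟩
  have hpos : (0 : ℚ) < s.length := by exact_mod_cast List.length_pos_iff.mpr hs
  simp only [List.length_append, Nat.cast_add] at this
  linarith

lemma not_isFactor_fifth_power (hpf : PowerFree (16 / 7) (tauInf y)) (hv : v ≠ []) :
    ¬ IsFactor y (v ++ v ++ v ++ v ++ v) := by
  intro h
  obtain ⟨b, hb⟩ := h.tauInf
  set s := tauAux b v
  set S := tauAux b (v ++ v)
  have hV : Even (v ++ v).length := ⟨_, List.length_append⟩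
  have hfifth : tauAux b (v ++ v ++ v ++ v ++ v) = S ++ (S ++ s) := by
    rw [show v ++ v ++ v ++ v ++ v = (v ++ v) ++ ((v ++ v) ++ v) by simp,
      tauAux_append_of_even b hV, tauAux_append_of_even b hV]
  rw [hfifth] at hb
  have hsS : s <+: S := by
    rw [show S = _ from tauAux_append b v v]
    exact List.prefix_append _ _
  have hS := tauAux_ne_nil b (v := v ++ v) (by simp [hv])
  have hSs : S ++ s <+: S ++ (S ++ s) :=
    (List.prefix_append_right_inj S |>.mpr hsS).trans (by simp)
  have := hpf.length_lt hb hS hSs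
  have hlen : (S.length : ℚ) = 2 * s.length := by
    simp only [S, s, length_tauAux, List.map_append, List.sum_append]
    push_cast
    ring
  have hpos : (0 : ℚ) < s.length := by
    exact_mod_cast List.length_pos_iff.mpr (tauAux_ne_nil b hv)
  simp only [List.length_append, Nat.cast_add, hlen] at this
  linarith

end Tau

/-- If `τ(g(fⁿ(x)))` is `16/7`-power-free for some `n ≥ 0`, then `x` is
`5`-power-free and even-`3`-power-free. -/
theorem bad_cubes (x : InfWord) (n : ℕ)
    (hpf : PowerFree (16 / 7) (tauInf (gInf (fInf^[n] x)))) :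
    PowerFree 5 x ∧
      ∀ p : Word, p ≠ [] → p.count 2 % 2 = 0 → ¬ IsFactor x (p ++ p ++ p) := by
  have hmap : ∀ a b : Word,
      gList (fList^[n] (a ++ b)) = gList (fList^[n] a) ++ gList (fList^[n] b) :=
    fun a b => by rw [Function.iterate_append fList_append, gList_append]
  constructor
  · intro u p hfac hne hper
    by_contra! hexp
    have hp := hper.1
    have h5 : 5 * p ≤ u.length := by
      exact_mod_cast (le_div_iff₀ (by exact_mod_cast hp : (0 : ℚ) < p)).mp hexp
    have hq : u.take p ≠ [] := by simp [hne, hp.ne']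
    refine not_isFactor_fifth_power hpf (gList_iterate_fList_ne_nil n hq) ?_
    simpa only [hper.take_five_mul h5, hmap] using ((hfac.take (5 * p)).iterate_fInf n).gInf
  · intro p hp heven hfac
    refine not_isFactor_cube_of_even_length hpf (gList_iterate_fList_ne_nil n hp)
      (even_length_gList_iterate_fList n (Nat.even_iff.mpr heven)) ?_
    simpa only [hmap] using (hfac.iterate_fInf n).gInf
end

section
/- Let w be a finite word over Σ₃. If w is poor, then the word g(w)·2 (the image of w under g followed by the letter 2) is middle-class. -/
/-- A word `w` is poor if every palindromic prefix of `w` with an even number of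
`2`'s occurs again in `w` preceded by a nonempty word with an even number of `2`'s. -/
def Poor (w : Word) : Prop :=
  ∀ u : Word, u <+: w → u.reverse = u → u.count 2 % 2 = 0 →
    ∃ p s : Word, w = p ++ u ++ s ∧ p ≠ [] ∧ p.count 2 % 2 = 0

/-- A word `w` is middle-class if it begins with `2` and every odd-length
palindromic prefix of `w` occurs again in `w` starting at an even index. -/
def MiddleClass (w : Word) : Prop :=
  w.head? = some 2 ∧
    ∀ u : Word, u <+: w → u.reverse = u → u.length % 2 = 1 →
      ∃ p s : Word, w = p ++ u ++ s ∧ p ≠ [] ∧ p.length % 2 = 0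

-- auxiliary development to splice in
def hm : Fin 3 → Word := ![[0,2],[1,2],[2]]
def hList (w : Word) : Word := w.flatMap hm

lemma gList_cons (a : Fin 3) (t : Word) : gList (a :: t) = gm a ++ gList t := by
  simp [gList]

lemma hList_cons (a : Fin 3) (t : Word) : hList (a :: t) = hm a ++ hList t := by
  simp [hList]

lemma key (w : Word) : gList w ++ [2] = 2 :: hList w := by
  induction w with
  | nil => rfl
  | cons a t ih =>
    rw [gList_cons, hList_cons, List.append_assoc, ih]
    fin_cases a <;> rfl

lemma glen (w : Word) : (gList w).length % 2 = w.count 2 % 2 := by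
  induction w with
  | nil => rfl
  | cons a t ih =>
    rw [gList_cons, List.length_append, List.count_cons]
    fin_cases a <;> simp [gm] <;> omega

lemma grev (w : Word) : (gList w).reverse = hList w.reverse := by
  induction w with
  | nil => rfl
  | cons a t ih =>
    rw [gList_cons, List.reverse_append, ih, List.reverse_cons]
    have : hList (t.reverse ++ [a]) = hList t.reverse ++ hm a := by
      simp [hList]
    rw [this]
    congr 1
    fin_cases a <;> rfl

lemma hInj : ∀ l1 l2 : Word, hList l1 = hList l2 → l1 = l2 := by
  intro l1
  induction l1 with
  | nil =>
    intro l2 h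
    cases l2 with
    | nil => rfl
    | cons b t =>
      rw [hList_cons] at h
      exfalso; fin_cases b <;> simp [hm, hList] at h
  | cons a t ih =>
    intro l2 h
    cases l2 with
    | nil =>
      rw [hList_cons] at h
      exfalso; fin_cases a <;> simp [hm, hList] at h
    | cons b t2 =>
      rw [hList_cons, hList_cons] at h
      have hab : a = b := by
        fin_cases a <;> fin_cases b <;> simp_all [hm]
      subst hab
      have := List.append_cancel_left h
      rw [ih t2 this]

lemma prefix_app {q x y : Word} (h : q <+: x ++ y) :
    q <+: x ∨ ∃ q', q = x ++ q' ∧ q' <+: y := by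
  rcases le_or_gt q.length x.length with hl | hl
  · left
    have hq : q = (x ++ y).take q.length := List.prefix_iff_eq_take.mp h
    rw [List.take_append_of_le_length hl] at hq
    rw [hq]
    exact List.take_prefix _ _
  · right
    have hx : x <+: q := by
      refine List.prefix_of_prefix_length_le (List.prefix_append x y) h ?_
      omega
    obtain ⟨q', rfl⟩ := hx
    refine ⟨q', rfl, ?_⟩
    obtain ⟨r, hr⟩ := h
    rw [List.append_assoc] at hr
    exact ⟨r, List.append_cancel_left hr⟩

lemma short_pref2 {x y : Fin 3} {q : Word} (h : q <+: [x, y]) :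
    q = [] ∨ q = [x] ∨ q = [x, y] := by
  cases q with
  | nil => exact Or.inl rfl
  | cons a q' =>
    rw [List.cons_prefix_cons] at h
    obtain ⟨rfl, h⟩ := h
    cases q' with
    | nil => exact Or.inr (Or.inl rfl)
    | cons b q'' =>
      rw [List.cons_prefix_cons] at h
      obtain ⟨rfl, h⟩ := h
      have := List.prefix_nil.mp h
      subst this
      exact Or.inr (Or.inr rfl)

lemma short_pref1 {x : Fin 3} {q : Word} (h : q <+: [x]) : q = [] ∨ q = [x] := by
  cases q with
  | nil => exact Or.inl rfl
  | cons a q' =>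
    rw [List.cons_prefix_cons] at h
    obtain ⟨rfl, h⟩ := h
    have := List.prefix_nil.mp h
    subst this
    exact Or.inr rfl

lemma factor2 : ∀ w q : Word, q <+: gList w ++ [2] → q.getLast? = some 2 →
    ∃ u', u' <+: w ∧ q = gList u' ++ [2] := by
  intro w
  induction w with
  | nil =>
    intro q hq hl
    rcases short_pref1 hq with rfl | rfl
    · simp at hl
    · exact ⟨[], List.nil_prefix, rfl⟩
  | cons a t ih =>
    intro q hq hl
    rw [gList_cons, List.append_assoc] at hq
    rcases prefix_app hq with h1 | ⟨q', rfl, hq'⟩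
    · -- q <+: gm a, must be [2]
      have hq2 : q = [2] := by
        fin_cases a
        · rcases short_pref2 h1 with rfl | rfl | rfl <;> simp_all [gm]
        · rcases short_pref2 h1 with rfl | rfl | rfl <;> simp_all [gm]
        · rcases short_pref1 h1 with rfl | rfl <;> simp_all [gm]
      subst hq2
      exact ⟨[], List.nil_prefix, rfl⟩
    · rcases eq_or_ne q' [] with rfl | hne
      · -- q = gm a, last letter of gm a is 2 only when a = 2
        rw [List.append_nil] at hl ⊢
        fin_cases a <;> simp [gm] at hl ⊢
        exact ⟨[], List.nil_prefix, rfl⟩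
      · rw [List.getLast?_append_of_ne_nil _ hne] at hl
        obtain ⟨u'', hpref, rfl⟩ := ih q' hq' hl
        exact ⟨a :: u'', List.cons_prefix_cons.mpr ⟨rfl, hpref⟩,
          by rw [gList_cons, List.append_assoc]⟩

lemma gList_ne_nil {p : Word} (hp : p ≠ []) : gList p ≠ [] := by
  cases p with
  | nil => exact absurd rfl hp
  | cons a t =>
    rw [gList_cons]
    fin_cases a <;> simp [gm]

/-- If `w` is poor, then `g(w)·2` is middle-class. -/
theorem poor_to_middle (w : Word) (hw : Poor w) : MiddleClass (gList w ++ [2]) := by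
  constructor
  · rw [key]; rfl
  · intro u hu hpal hodd
    have hne : u ≠ [] := by
      intro h; subst h; simp at hodd
    have hlast : u.getLast? = some 2 := by
      have hh : u.head? = some 2 := by
        rw [key] at hu
        cases u with
        | nil => exact absurd rfl hne
        | cons a q =>
          obtain ⟨rfl, -⟩ := List.cons_prefix_cons.mp hu
          rfl
      rw [← List.head?_reverse, hpal, hh]
    obtain ⟨u', hu'pref, rfl⟩ := factor2 w u hu hlast
    have hcnt : u'.count 2 % 2 = 0 := by
      rw [List.length_append, List.length_singleton] at hodd
      have := glen u'
      omega
    have hpal' : u'.reverse = u' := by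
      apply hInj
      have h1 : (gList u' ++ [2]).reverse = 2 :: hList u'.reverse := by
        rw [List.reverse_append, grev]; rfl
      rw [hpal, key] at h1
      exact (List.cons.injEq _ _ _ _ ▸ h1).2.symm ▸ rfl
    obtain ⟨p, s, hsplit, hpne, hpcnt⟩ := hw u' hu'pref hpal' hcnt
    refine ⟨gList p, hList s, ?_, gList_ne_nil hpne, ?_⟩
    · rw [hsplit]
      have : gList (p ++ u' ++ s) = gList p ++ gList u' ++ gList s := by
        simp [gList]
      rw [this, List.append_assoc, List.append_assoc, List.append_assoc, key s]
      simp
    · rw [glen]; exact hpcnt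
end
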